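/- Inquisitive normal form theorem: for any formula φ of L with resolutions R(φ) = {α₁,…,αₙ}, φ is InqI-equivalent to α₁⩾⋯⩾αₙ, i.e., for every intuitionistic Kripke model M and team t: M,t ⊨ φ if and only if M,t ⊨ αᵢ for some i ≤ n. -/

import Mathlib

/-- Formulas of the language L: atoms, ⊥, ∧, ∨, →, and inquisitive disjunction ⩾. -/
inductive Formula (P : Type) : Type
  | atom : P → Formula P
  | bot  : Formula P
  | and  : Formula P → Formula P → Formula P
  | or   : Formula P → Formula P → Formula P
  | impl : Formula P → Formula P → Formula P
  | iorr : Formula P → Formula P → Formula P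

namespace Formula

/-- Negation ¬φ := φ → ⊥. -/
def neg {P : Type} (φ : Formula P) : Formula P := Formula.impl φ Formula.bot

/-- Polar question ?φ := φ ⩾ ¬φ. -/
def question {P : Type} (φ : Formula P) : Formula P := Formula.iorr φ φ.neg

/-- A standard formula contains no occurrence of inquisitive disjunction ⩾. -/
def standard {P : Type} : Formula P → Prop
  | atom _ => True
  | bot => True
  | and φ ψ => φ.standard ∧ ψ.standard
  | or φ ψ => φ.standard ∧ ψ.standard
  | impl φ ψ => φ.standard ∧ ψ.standard
  | iorr _ _ => False

end Formula

/-- An intuitionistic Kripke model: a partially ordered set of worlds with a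
persistent valuation. -/
structure KripkeModel (P : Type) where
  W : Type
  R : W → W → Prop
  refl : ∀ w, R w w
  antisymm : ∀ w v, R w v → R v w → w = v
  trans : ∀ w v u, R w v → R v u → R w u
  V : W → P → Prop
  persistent : ∀ w v p, R w v → V w p → V v p

/-- R[t], the up-set generated by a team t. -/
def KripkeModel.upset {P : Type} (M : KripkeModel P) (t : Set M.W) : Set M.W :=
  {v | ∃ w ∈ t, M.R w v}

/-- The support relation M,t ⊨ φ between teams and formulas. -/
def support {P : Type} (M : KripkeModel P) : Formula P → Set M.W → Prop
  | .atom p, t => ∀ w ∈ t, M.V w p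
  | .bot, t => t = ∅
  | .and φ ψ, t => support M φ t ∧ support M ψ t
  | .or φ ψ, t => ∃ t₁ t₂, t = t₁ ∪ t₂ ∧ support M φ t₁ ∧ support M ψ t₂
  | .impl φ ψ, t => ∀ t', t' ⊆ M.upset t → support M φ t' → support M ψ t'
  | .iorr φ ψ, t => support M φ t ∨ support M ψ t

/-- Truth at a world: M,w ⊨ φ iff M,{w} ⊨ φ. -/
def truth {P : Type} (M : KripkeModel P) (w : M.W) (φ : Formula P) : Prop :=
  support M φ {w}

/-- A formula is truth-conditional if support at a team amounts to truth at each world. -/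
def truthConditional {P : Type} (φ : Formula P) : Prop :=
  ∀ (M : KripkeModel P) (t : Set M.W), support M φ t ↔ ∀ w ∈ t, truth M w φ

/-- The partial truth-value function: `tvalIs M w φ b` says T(w,φ) is defined with value b
(b = true for value 1, i.e. M,w ⊨ φ; b = false for value 0, i.e. M,w ⊨ ¬φ). -/
def tvalIs {P : Type} (M : KripkeModel P) (w : M.W) (φ : Formula P) : Bool → Prop
  | true => truth M w φ
  | false => truth M w φ.neg

/-- Big conjunction of a list of formulas (empty conjunction is the verum ⊥→⊥). -/
def bigConj {P : Type} : List (Formula P) → Formula P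
  | [] => Formula.impl Formula.bot Formula.bot
  | [φ] => φ
  | φ :: ψ :: rest => Formula.and φ (bigConj (ψ :: rest))

/-- Big disjunction (with ∨) of a list of formulas. -/
def bigDisj {P : Type} : List (Formula P) → Formula P
  | [] => Formula.bot
  | [φ] => φ
  | φ :: ψ :: rest => Formula.or φ (bigDisj (ψ :: rest))

/-- All ways of choosing, for each element `a` of the second list, a pair `(a,b)`
with `b` from the first list; these represent the functions f : R(φ) → R(ψ). -/
def selections {P : Type} (bs : List (Formula P)) :
    List (Formula P) → List (List (Formula P × Formula P))
  | [] => [[]]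
  | a :: rest => (selections bs rest).flatMap (fun s => bs.map (fun b => (a, b) :: s))

/-- The resolutions R(φ) of a formula φ. -/
def resolutions {P : Type} : Formula P → List (Formula P)
  | .atom p => [.atom p]
  | .bot => [.bot]
  | .and φ ψ => (resolutions φ).flatMap (fun a => (resolutions ψ).map (fun b => .and a b))
  | .or φ ψ => (resolutions φ).flatMap (fun a => (resolutions ψ).map (fun b => .or a b))
  | .impl φ ψ => (selections (resolutions ψ) (resolutions φ)).map
      (fun s => bigConj (s.map (fun ab => Formula.impl ab.1 ab.2)))
  | .iorr φ ψ => resolutions φ ++ resolutions ψ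

/-!
A resolution is a standard formula, and standard formulas are truth-conditional: a team
supports them iff every world in it does. By induction on `φ`, every connective except `→`
commutes with taking resolutions. For `φ → ψ`, support at `t` reduces to support of `α → ψ`
for each resolution `α` of `φ`; as `α` is truth-conditional, `α → ψ` is supported iff `ψ` is
supported by the single team of worlds above `t` where `α` is true, so one resolution `f α`
of `ψ` can be chosen for each `α`, which is exactly a resolution `⋀ (α → f α)` of `φ → ψ`.
-/

open Formula

section Support

variable {P : Type} {M : KripkeModel P}

theorem KripkeModel.upset_mono {t t' : Set M.W} (h : t' ⊆ t) : M.upset t' ⊆ M.upset t := by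
  rintro v ⟨w, hw, hwv⟩
  exact ⟨w, h hw, hwv⟩

theorem support_of_subset (φ : Formula P) {t t' : Set M.W} (h : t' ⊆ t) (hφ : support M φ t) :
    support M φ t' := by
  induction φ generalizing t t' with
  | atom p => exact fun w hw => hφ w (h hw)
  | bot => exact Set.subset_eq_empty h hφ
  | and φ ψ ihφ ihψ => exact ⟨ihφ h hφ.1, ihψ h hφ.2⟩
  | or φ ψ ihφ ihψ =>
    obtain ⟨t₁, t₂, rfl, h₁, h₂⟩ := hφ
    refine ⟨t' ∩ t₁, t' ∩ t₂, ?_, ihφ Set.inter_subset_right h₁, ihψ Set.inter_subset_right h₂⟩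
    rw [← Set.inter_union_distrib_left, Set.inter_eq_left.mpr h]
  | impl φ ψ _ _ => exact fun t'' ht'' => hφ t'' (ht''.trans (KripkeModel.upset_mono h))
  | iorr φ ψ ihφ ihψ => exact hφ.imp (ihφ h) (ihψ h)

theorem truth_of_support {φ : Formula P} {t : Set M.W} (hφ : support M φ t) {w : M.W}
    (hw : w ∈ t) : truth M w φ :=
  support_of_subset φ (Set.singleton_subset_iff.mpr hw) hφ

theorem truth_or_truth_of_truth_or {φ ψ : Formula P} {w : M.W} (h : truth M w (.or φ ψ)) :
    truth M w φ ∨ truth M w ψ := by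
  obtain ⟨t₁, t₂, h_eq, h₁, h₂⟩ := h
  have hw : w ∈ t₁ ∪ t₂ := h_eq ▸ rfl
  exact hw.imp (truth_of_support h₁) (truth_of_support h₂)

theorem truthConditional_of_standard {φ : Formula P} (h : φ.standard) : truthConditional φ := by
  intro M t
  refine ⟨fun hφ w hw => truth_of_support hφ hw, fun htruth => ?_⟩
  induction φ generalizing t with
  | atom p => exact fun w hw => htruth w hw w rfl
  | bot => exact Set.eq_empty_of_forall_notMem fun w hw => Set.singleton_ne_empty w (htruth w hw)
  | and φ ψ ihφ ihψ =>
    exact ⟨ihφ h.1 t fun w hw => (htruth w hw).1, ihψ h.2 t fun w hw => (htruth w hw).2⟩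
  | or φ ψ ihφ ihψ =>
    refine ⟨{w ∈ t | truth M w φ}, {w ∈ t | truth M w ψ}, ?_, ihφ h.1 _ fun w hw => hw.2,
      ihψ h.2 _ fun w hw => hw.2⟩
    ext w
    have := fun hw => truth_or_truth_of_truth_or (htruth w hw)
    simp only [Set.mem_union, Set.mem_ofPred_eq]
    tauto
  | impl φ ψ _ ihψ =>
    intro t' ht' hφ'
    refine ihψ h.2 t' fun v hv => ?_
    obtain ⟨w, hw, hwv⟩ := ht' hv
    exact htruth w hw {v} (by rintro _ rfl; exact ⟨w, rfl, hwv⟩) (truth_of_support hφ' hv)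
  | iorr => exact h.elim

theorem support_impl_iff_of_truthConditional {α : Formula P} (hα : truthConditional α)
    (ψ : Formula P) (t : Set M.W) :
    support M (.impl α ψ) t ↔ support M ψ {v ∈ M.upset t | truth M v α} := by
  refine ⟨fun h => h _ (fun v hv => hv.1) ((hα M _).mpr fun v hv => hv.2), fun h t' ht' hα' => ?_⟩
  exact support_of_subset ψ (fun v hv => show v ∈ M.upset t ∧ truth M v α from
    ⟨ht' hv, (hα M t').mp hα' v hv⟩) h

theorem support_bigConj (l : List (Formula P)) (t : Set M.W) :
    support M (bigConj l) t ↔ ∀ χ ∈ l, support M χ t := by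
  induction l using bigConj.induct with
  | case1 => simp [bigConj, support]
  | case2 φ => simp [bigConj]
  | case3 φ ψ rest ih => simp [bigConj, support, ih]

end Support

section Resolutions

variable {P : Type}

theorem standard_bigConj {l : List (Formula P)} (h : ∀ χ ∈ l, χ.standard) :
    (bigConj l).standard := by
  induction l using bigConj.induct with
  | case1 => exact ⟨trivial, trivial⟩
  | case2 φ => exact h φ (by simp)
  | case3 φ ψ rest ih => simp_all [bigConj, standard]

theorem mem_of_mem_selections {bs as : List (Formula P)} {s : List (Formula P × Formula P)}
    (hs : s ∈ selections bs as) {p : Formula P × Formula P} (hp : p ∈ s) :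
    p.1 ∈ as ∧ p.2 ∈ bs := by
  induction as generalizing s with
  | nil => simp_all [selections]
  | cons a rest ih =>
    simp only [selections, List.mem_flatMap, List.mem_map] at hs
    obtain ⟨s', hs', b, hb, rfl⟩ := hs
    rcases List.mem_cons.mp hp with rfl | hp
    · exact ⟨List.mem_cons_self, hb⟩
    · exact (ih hs' hp).imp_left (List.mem_cons_of_mem a)

theorem forall_exists_iff_exists_selections (S : Formula P → Formula P → Prop)
    (bs as : List (Formula P)) :
    (∀ a ∈ as, ∃ b ∈ bs, S a b) ↔ ∃ s ∈ selections bs as, ∀ p ∈ s, S p.1 p.2 := by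
  induction as with
  | nil => simp [selections]
  | cons a rest ih =>
    simp only [List.forall_mem_cons, ih, selections, List.mem_flatMap, List.mem_map]
    constructor
    · rintro ⟨⟨b, hb, hab⟩, s, hs, hS⟩
      exact ⟨_, ⟨s, hs, b, hb, rfl⟩, List.forall_mem_cons.mpr ⟨hab, hS⟩⟩
    · rintro ⟨_, ⟨s, hs, b, hb, rfl⟩, hS⟩
      obtain ⟨hab, hS⟩ := List.forall_mem_cons.mp hS
      exact ⟨⟨b, hb, hab⟩, s, hs, hS⟩

theorem standard_of_mem_resolutions {φ α : Formula P} (hα : α ∈ resolutions φ) : α.standard := by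
  induction φ generalizing α with
  | atom | bot => simp_all [resolutions, standard]
  | and φ ψ ihφ ihψ | or φ ψ ihφ ihψ =>
    simp only [resolutions, List.mem_flatMap, List.mem_map] at hα
    obtain ⟨a, ha, b, hb, rfl⟩ := hα
    exact ⟨ihφ ha, ihψ hb⟩
  | impl φ ψ ihφ ihψ =>
    simp only [resolutions, List.mem_map] at hα
    obtain ⟨s, hs, rfl⟩ := hα
    refine standard_bigConj fun χ hχ => ?_
    obtain ⟨p, hp, rfl⟩ := List.mem_map.mp hχ
    exact ⟨ihφ (mem_of_mem_selections hs hp).1, ihψ (mem_of_mem_selections hs hp).2⟩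
  | iorr φ ψ ihφ ihψ =>
    simp only [resolutions, List.mem_append] at hα
    exact hα.elim ihφ ihψ

end Resolutions

section NormalForm

variable {P : Type} {M : KripkeModel P}

def HasNormalForm (M : KripkeModel P) (φ : Formula P) : Prop :=
  ∀ t, support M φ t ↔ ∃ α ∈ resolutions φ, support M α t

theorem HasNormalForm.and {φ ψ : Formula P} (hφ : HasNormalForm M φ) (hψ : HasNormalForm M ψ) :
    HasNormalForm M (.and φ ψ) := by
  intro t
  simp only [support, hφ t, hψ t, resolutions, List.mem_flatMap, List.mem_map,
    exists_exists_and_exists_and_eq_and]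
  constructor
  · rintro ⟨⟨a, ha, hsa⟩, b, hb, hsb⟩
    exact ⟨a, ha, b, hb, hsa, hsb⟩
  · rintro ⟨a, ha, b, hb, hsa, hsb⟩
    exact ⟨⟨a, ha, hsa⟩, b, hb, hsb⟩

theorem HasNormalForm.or {φ ψ : Formula P} (hφ : HasNormalForm M φ) (hψ : HasNormalForm M ψ) :
    HasNormalForm M (.or φ ψ) := by
  intro t
  simp only [support, hφ _, hψ _, resolutions, List.mem_flatMap, List.mem_map,
    exists_exists_and_exists_and_eq_and]
  constructor
  · rintro ⟨t₁, t₂, rfl, ⟨a, ha, hsa⟩, b, hb, hsb⟩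
    exact ⟨a, ha, b, hb, t₁, t₂, rfl, hsa, hsb⟩
  · rintro ⟨a, ha, b, hb, t₁, t₂, rfl, hsa, hsb⟩
    exact ⟨t₁, t₂, rfl, ⟨a, ha, hsa⟩, b, hb, hsb⟩

theorem HasNormalForm.iorr {φ ψ : Formula P} (hφ : HasNormalForm M φ) (hψ : HasNormalForm M ψ) :
    HasNormalForm M (.iorr φ ψ) := by
  intro t
  simp only [support, hφ t, hψ t, resolutions, List.mem_append, or_and_right, exists_or]

theorem HasNormalForm.support_impl_iff {φ : Formula P} (hφ : HasNormalForm M φ) (ψ : Formula P)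
    (t : Set M.W) :
    support M (.impl φ ψ) t ↔ ∀ α ∈ resolutions φ, support M (.impl α ψ) t := by
  constructor
  · exact fun h α hα t' ht' hα' => h t' ht' ((hφ t').mpr ⟨α, hα, hα'⟩)
  · intro h t' ht' hφ'
    obtain ⟨α, hα, hα'⟩ := (hφ t').mp hφ'
    exact h α hα t' ht' hα'

theorem HasNormalForm.support_impl_iff_exists {ψ : Formula P} (hψ : HasNormalForm M ψ)
    {α : Formula P} (hα : truthConditional α) (t : Set M.W) :
    support M (.impl α ψ) t ↔ ∃ β ∈ resolutions ψ, support M (.impl α β) t := by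
  simp only [support_impl_iff_of_truthConditional hα, hψ _]

theorem HasNormalForm.impl {φ ψ : Formula P} (hφ : HasNormalForm M φ) (hψ : HasNormalForm M ψ) :
    HasNormalForm M (.impl φ ψ) := by
  intro t
  calc support M (.impl φ ψ) t
      ↔ ∀ α ∈ resolutions φ, ∃ β ∈ resolutions ψ, support M (.impl α β) t := by
        rw [hφ.support_impl_iff]
        exact forall₂_congr fun α hα => hψ.support_impl_iff_exists
          (truthConditional_of_standard (standard_of_mem_resolutions hα)) t
    _ ↔ ∃ s ∈ selections (resolutions ψ) (resolutions φ), ∀ p ∈ s, support M (.impl p.1 p.2) t :=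
        forall_exists_iff_exists_selections _ _ _
    _ ↔ ∃ s ∈ selections (resolutions ψ) (resolutions φ),
          support M (bigConj (s.map fun p => .impl p.1 p.2)) t := by
        simp only [support_bigConj, List.forall_mem_map]
    _ ↔ ∃ γ ∈ resolutions (.impl φ ψ), support M γ t := by
        simp only [resolutions, List.mem_map, exists_exists_and_eq_and]

end NormalForm

/-- inquisitive normal form: every formula is equivalent to the
inquisitive disjunction of its resolutions, i.e. a team supports φ iff it supports
some resolution of φ. -/
theorem inquisitive_normal_form {P : Type} (φ : Formula P) (M : KripkeModel P)
    (t : Set M.W) :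
    support M φ t ↔ ∃ α ∈ resolutions φ, support M α t := by
  induction φ generalizing t with
  | atom p => simp [resolutions]
  | bot => simp [resolutions]
  | and φ ψ ihφ ihψ => exact HasNormalForm.and ihφ ihψ t
  | or φ ψ ihφ ihψ => exact HasNormalForm.or ihφ ihψ t
  | impl φ ψ ihφ ihψ => exact HasNormalForm.impl ihφ ihψ t
  | iorr φ ψ ihφ ihψ => exact HasNormalForm.iorr ihφ ihψ t
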